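/- Let n ≥ 2, let α < 0 be real, and let a, b ∈ ℝ with b < a. Then { z ∈ ℂⁿ : ∃ A ∈ U(n), i·a·I + (iα/2)·zz* = A·(i·diag(a, …, a, b))·A* } = { z ∈ ℂⁿ : ‖z‖² = 2(b − a)/α }. In particular this set is nonempty, so for λ = (a,…,a) and μ = (a, …, a, b) the intersection O^G_{(U_λ,α)} ∩ pr⁻¹(O^K_{U_μ}) is nonempty, i.e. n(O^G_{(λ,α)}, O^K_μ) ≠ 0. (Sufficiency in Theorem 4, Case α < 0 with q = 1.) -/

import Mathlib

/-!
Conjugating `i·diag(a,…,a,b)` by a unitary `A` gives `i a I + i (b - a) u u*`, where `u` is the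
last column of `A`. So the defining equation of the set says exactly `z z* = c u u*` for a unit
vector `u`, where `c = 2 (b - a) / α > 0`. Taking traces forces `‖z‖² = c`. Conversely, if `‖z‖² = c` then
`u = z / √c` is a unit vector, and it is the last column of some unitary matrix. With `k = 1`,
any such `z` gives a point of `O^G ∩ pr⁻¹(O^K)`.
-/

open Matrix Complex Finset

/-- The outer matrix `z w*` with `(l,j)` entry `z l * conj (w j)`. -/
noncomputable def outerMat {n : ℕ} (z w : Fin n → ℂ) : Matrix (Fin n) (Fin n) ℂ :=
  Matrix.of fun l j => z l * (starRingEnd ℂ) (w j)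

/-- The generic coadjoint orbit `O^G_{(U,α)}` of the Heisenberg motion group,
realized in `M_n(ℂ) × ℂⁿ`. -/
noncomputable def genOrbit {n : ℕ} (U : Matrix (Fin n) (Fin n) ℂ) (α : ℝ) :
    Set (Matrix (Fin n) (Fin n) ℂ × (Fin n → ℂ)) :=
  {p | ∃ k : Matrix.unitaryGroup (Fin n) ℂ, ∃ z : Fin n → ℂ,
    p = ((k : Matrix (Fin n) (Fin n) ℂ) *
          (U + ((Complex.I * (α : ℂ)) / 2) • outerMat z z) *
          star (k : Matrix (Fin n) (Fin n) ℂ),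
        (α : ℂ) • (k : Matrix (Fin n) (Fin n) ℂ).mulVec z)}

/-- `pr⁻¹(O^K_X)` realized in `M_n(ℂ) × ℂⁿ`. -/
noncomputable def prInv {n : ℕ} (X : Matrix (Fin n) (Fin n) ℂ) :
    Set (Matrix (Fin n) (Fin n) ℂ × (Fin n → ℂ)) :=
  {p | ∃ A : Matrix.unitaryGroup (Fin n) ℂ,
    p.1 = (A : Matrix (Fin n) (Fin n) ℂ) * X * star (A : Matrix (Fin n) (Fin n) ℂ)}


section OuterMat

variable {n : ℕ}

lemma outerMat_eq_vecMulVec (z w : Fin n → ℂ) : outerMat z w = vecMulVec z (star w) := rfl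

lemma trace_outerMat_self (z : Fin n → ℂ) :
    trace (outerMat z z) = ((∑ j, normSq (z j) : ℝ) : ℂ) := by
  simp [outerMat_eq_vecMulVec, trace_vecMulVec, dotProduct, mul_conj]

lemma outerMat_real_smul (r : ℝ) (z : Fin n → ℂ) :
    outerMat (r • z) (r • z) = ((r ^ 2 : ℝ) : ℂ) • outerMat z z := by
  ext l j
  simp [outerMat]
  ring

lemma mul_outerMat_mul_star (A : Matrix (Fin n) (Fin n) ℂ) (v w : Fin n → ℂ) :
    A * outerMat v w * star A = outerMat (A *ᵥ v) (A *ᵥ w) := by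
  rw [outerMat_eq_vecMulVec, outerMat_eq_vecMulVec, mul_vecMulVec, vecMulVec_mul, star_mulVec,
    star_eq_conjTranspose]

lemma diagonal_ite_eq (i₀ : Fin n) (a b : ℂ) :
    diagonal (fun i => if i = i₀ then b else a)
      = a • 1 + (b - a) • outerMat (Pi.single i₀ 1) (Pi.single i₀ 1) := by
  ext l j
  simp only [diagonal_apply, outerMat, Pi.single_apply, Matrix.add_apply, Matrix.smul_apply,
    one_apply, of_apply]
  split_ifs <;> subst_vars <;> simp_all

lemma unitary_conj_diagonal_ite {A : Matrix (Fin n) (Fin n) ℂ} (hA : A ∈ unitaryGroup (Fin n) ℂ)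
    (i₀ : Fin n) (a b : ℂ) :
    A * diagonal (fun i => if i = i₀ then b else a) * star A
      = a • 1 + (b - a) • outerMat (A.col i₀) (A.col i₀) := by
  rw [diagonal_ite_eq, Matrix.mul_add, Matrix.add_mul, Matrix.mul_smul, Matrix.mul_one,
    Matrix.smul_mul, mem_unitaryGroup_iff.mp hA, Matrix.mul_smul, Matrix.smul_mul,
    mul_outerMat_mul_star, mulVec_single_one]

end OuterMat

section UnitaryColumn

variable {ι : Type*} [Fintype ι] [DecidableEq ι]

lemma sum_normSq_col_eq_one {A : Matrix ι ι ℂ} (hA : A ∈ unitaryGroup ι ℂ) (j : ι) :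
    ∑ i, normSq (A i j) = 1 := by
  have h := congrFun (congrFun (mem_unitaryGroup_iff'.mp hA) j) j
  rw [mul_apply, one_apply_eq] at h
  have h' : ∑ i, ((normSq (A i j) : ℝ) : ℂ) = 1 := by simpa [normSq_eq_conj_mul_self] using h
  exact_mod_cast h'

lemma exists_unitaryGroup_col_eq (j : ι) (u : ι → ℂ) (hu : ∑ i, normSq (u i) = 1) :
    ∃ A : unitaryGroup ι ℂ, (A : Matrix ι ι ℂ).col j = u := by
  have hnorm : ‖WithLp.toLp 2 u‖ = 1 := by
    rw [EuclideanSpace.norm_eq]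
    simp [Complex.sq_norm, hu]
  have horth : Orthonormal ℂ (({j} : Set ι).domRestrict fun _ => WithLp.toLp 2 u) :=
    ⟨fun _ => hnorm, fun i i' hii' => absurd (Subsingleton.elim i i') hii'⟩
  obtain ⟨b, hb⟩ := horth.exists_orthonormalBasis_extension_of_card_eq (by simp)
  refine ⟨⟨_, (EuclideanSpace.basisFun ι ℂ).toMatrix_orthonormalBasis_mem_unitary b⟩, ?_⟩
  ext l
  simp [Module.Basis.toMatrix_apply, hb j rfl]

end UnitaryColumn

lemma exists_unitaryGroup_outerMat_col_iff {n : ℕ} (i₀ : Fin n) {c : ℝ} (hc : 0 < c)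
    (z : Fin n → ℂ) :
    (∃ A : unitaryGroup (Fin n) ℂ, outerMat z z
        = (c : ℂ) • outerMat ((A : Matrix (Fin n) (Fin n) ℂ).col i₀)
            ((A : Matrix (Fin n) (Fin n) ℂ).col i₀))
      ↔ ∑ j, normSq (z j) = c := by
  constructor
  · rintro ⟨A, hA⟩
    have htr := congrArg trace hA
    rw [trace_smul, trace_outerMat_self, trace_outerMat_self] at htr
    simp only [col_apply, sum_normSq_col_eq_one A.2, ofReal_one, smul_eq_mul, mul_one] at htr
    exact_mod_cast htr
  · intro hz
    have hr : 0 < √c := Real.sqrt_pos.mpr hc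
    obtain ⟨A, hA⟩ := exists_unitaryGroup_col_eq i₀ ((√c)⁻¹ • z) (by
      simp only [Pi.smul_apply, Complex.real_smul, normSq_mul, normSq_ofReal, ← Finset.mul_sum, hz]
      field_simp
      rw [Real.sq_sqrt hc.le])
    refine ⟨A, ?_⟩
    rw [hA, outerMat_real_smul, smul_smul, ← ofReal_mul, inv_pow, Real.sq_sqrt hc.le,
      mul_inv_cancel₀ hc.ne', ofReal_one, one_smul]

theorem setOf_exists_unitary_conj_diagonal_eq {n : ℕ} (i₀ : Fin n) {α a b : ℝ}
    (hc : 0 < 2 * (b - a) / α) :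
    {z : Fin n → ℂ | ∃ A : unitaryGroup (Fin n) ℂ,
        (I * a) • (1 : Matrix (Fin n) (Fin n) ℂ) + (I * α / 2) • outerMat z z
          = (A : Matrix (Fin n) (Fin n) ℂ) *
              (I • diagonal fun i => if i = i₀ then (b : ℂ) else a) *
              star (A : Matrix (Fin n) (Fin n) ℂ)}
      = {z | ∑ j, normSq (z j) = 2 * (b - a) / α} := by
  have hα : α ≠ 0 := by rintro rfl; simp at hc
  have hscale : I * ((b : ℂ) - a) = (I * α / 2) * ((2 * (b - a) / α : ℝ) : ℂ) := by
    have : (α : ℂ) ≠ 0 := ofReal_ne_zero.mpr hα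
    push_cast
    field_simp
  ext z
  refine (exists_congr fun A => ?_).trans (exists_unitaryGroup_outerMat_col_iff i₀ hc z)
  rw [Matrix.mul_smul, Matrix.smul_mul, unitary_conj_diagonal_ite A.2, smul_add, smul_smul,
    smul_smul, add_right_inj, hscale, ← smul_smul, smul_right_inj (by simp [hα]), eq_comm]

/-- sufficiency in Theorem 4, case `α < 0`, `q = 1`: for `b < a`,
`F_μ = {z : ‖z‖² = 2(b−a)/α}` where `μ = (a,…,a,b)`; in particular it is
nonempty, hence `O^G_{(U_λ,α)} ∩ pr⁻¹(O^K_{U_μ})` is nonempty for `λ = (a,…,a)`,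
i.e. `n(O^G_{(λ,α)}, O^K_μ) ≠ 0`. -/
theorem Fmu_nonempty_neg {n : ℕ} (hn : 2 ≤ n) (α : ℝ) (hα : α < 0)
    (a b : ℝ) (hab : b < a) :
    {z : Fin n → ℂ | ∃ A : Matrix.unitaryGroup (Fin n) ℂ,
        (Complex.I * (a : ℂ)) • (1 : Matrix (Fin n) (Fin n) ℂ)
            + ((Complex.I * (α : ℂ)) / 2) • outerMat z z
          = (A : Matrix (Fin n) (Fin n) ℂ) *
              (Complex.I • Matrix.diagonal fun i : Fin n =>
                if (i : ℕ) = n - 1 then (b : ℂ) else (a : ℂ)) *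
              star (A : Matrix (Fin n) (Fin n) ℂ)}
      = {z : Fin n → ℂ | ∑ j, Complex.normSq (z j) = 2 * (b - a) / α}
    ∧ (genOrbit ((Complex.I * (a : ℂ)) • (1 : Matrix (Fin n) (Fin n) ℂ)) α ∩
        prInv (Complex.I • Matrix.diagonal fun i : Fin n =>
          if (i : ℕ) = n - 1 then (b : ℂ) else (a : ℂ))).Nonempty := by
  have hc : 0 < 2 * (b - a) / α := div_pos_of_neg_of_neg (by linarith) hα
  set i₀ : Fin n := ⟨n - 1, by omega⟩
  have hlast : (fun i : Fin n => if (i : ℕ) = n - 1 then (b : ℂ) else a)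
      = fun i => if i = i₀ then (b : ℂ) else a := by
    simp [i₀, Fin.ext_iff]
  have hF := setOf_exists_unitary_conj_diagonal_eq i₀ hc
  rw [hlast]
  refine ⟨hF, ?_⟩
  obtain ⟨z, hz⟩ : ∃ z : Fin n → ℂ, ∑ j, normSq (z j) = 2 * (b - a) / α :=
    ⟨Pi.single i₀ (√(2 * (b - a) / α) : ℂ),
      by simp [Pi.single_apply, apply_ite normSq, Real.mul_self_sqrt hc.le]⟩
  obtain ⟨A, hA⟩ := (Set.ext_iff.mp hF z).mpr hz
  exact ⟨(_, (α : ℂ) • z), ⟨1, z, by simp⟩, A, hA⟩
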